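/- For the partially consistent orthant nonlinear expectation $\mathfrak{E}_S(X) = \operatorname{esssup}_{\mathbb{Q}\in\mathcal{Q}}\mathbb{E}^{\mathbb{Q}}(X\mid\mathcal{F}(S))$ with $\mathcal{Q}$ a family of product measures, sub-consistency holds: for orthant stopping times $S \le S'$, $\mathfrak{E}_S(X) \le \mathfrak{E}_S(\mathfrak{E}_{S'}(X))$ almost surely for every bounded measurable $X$. In particular, if $\mathfrak{E}_{S'}(X) \le 0$ a.s., then for any $A \in \mathcal{F}(S')$, $\mathfrak{E}_S(\mathbb{I}_A X) \le 0$ a.s. -/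

import Mathlib

open MeasureTheory

/-- The family of product measures built from the marginal families `𝒬 i`. -/
def productFamily {ι : Type*} [Fintype ι] {Ω : ι → Type*}
    [mΩ : ∀ i, MeasurableSpace (Ω i)]
    (𝒬 : ∀ i, Set (Measure (Ω i))) : Set (Measure (∀ i, Ω i)) :=
  {Q | ∃ q : ∀ i, Measure (Ω i), ∃ hq : ∀ i, IsProbabilityMeasure (q i),
    (∀ i, q i ∈ 𝒬 i) ∧
    Q = by haveI := hq; exact Measure.pi q}

open Filter Set Topology
open scoped NNReal

/-!
Every `Q ∈ 𝒬` is equivalent to `P = ⊗ Pᵢ`, since absolute continuity passes to finite products,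
so a.e. statements may be read under any `Q`. The only subtle point is that `𝔈_{S'}(X)` is known
merely as an a.e. least upper bound and need not be measurable. But the family
`Q[X | ℱ(S')]` is uniformly bounded, so it has a bounded measurable essential supremum — the
pointwise supremum of a sequence of running maxima whose `P`-integrals approach the largest
possible value — and this agrees with `𝔈_{S'}(X)` a.e. The tower property and monotonicity of
conditional expectations then give
`Q[X | ℱ(S)] = Q[Q[X | ℱ(S')] | ℱ(S)] ≤ Q[𝔈_{S'}(X) | ℱ(S)] ≤ 𝔈_S(𝔈_{S'}(X))`,
and likewise `Q[1_A X | ℱ(S')] = 1_A Q[X | ℱ(S')] ≤ 0` for `A ∈ ℱ(S')`.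
-/

universe u v

theorem MeasureTheory.Measure.AbsolutelyContinuous.pi {ι : Type u} [Fintype ι] {α : ι → Type v}
    [∀ i, MeasurableSpace (α i)] {μ ν : ∀ i, Measure (α i)} [∀ i, SigmaFinite (μ i)]
    [∀ i, SigmaFinite (ν i)] (h : ∀ i, μ i ≪ ν i) : Measure.pi μ ≪ Measure.pi ν := by
  refine Fintype.induction_empty_option
    (P := fun ι _ => ∀ (α : ι → Type v) [∀ i, MeasurableSpace (α i)]
      (μ ν : ∀ i, Measure (α i)) [∀ i, SigmaFinite (μ i)] [∀ i, SigmaFinite (ν i)],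
      (∀ i, μ i ≪ ν i) → Measure.pi μ ≪ Measure.pi ν) ?_ ?_ ?_ ι α μ ν h
  · intro ι ι' _ e ih α _ μ ν _ _ h
    let : Fintype ι := Fintype.ofEquiv ι' e.symm
    rw [← Measure.pi_map_piCongrLeft e μ, ← Measure.pi_map_piCongrLeft e ν]
    exact (ih _ _ _ fun i => h (e i)).map (MeasurableEquiv.piCongrLeft α e).measurable
  · intro α _ μ ν _ _ _
    rw [Measure.pi_of_empty μ, Measure.pi_of_empty ν]
  · intro ι _ ih α _ μ ν _ _ h
    rw [← Measure.pi_map_piOptionEquivProd μ, ← Measure.pi_map_piOptionEquivProd ν]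
    exact ((ih _ _ _ fun i => h (some i)).prod (h none)).map
      (MeasurableEquiv.piOptionEquivProd α).symm.measurable

theorem MeasurableSpace.pi_mono {ι : Type*} {α : ι → Type*} {m₁ m₂ : ∀ i, MeasurableSpace (α i)}
    (h : ∀ i, m₁ i ≤ m₂ i) : @MeasurableSpace.pi ι α m₁ ≤ @MeasurableSpace.pi ι α m₂ :=
  iSup_mono fun i => MeasurableSpace.comap_mono (h i)

section ProductFamily

variable {ι : Type*} [Fintype ι] {Ω : ι → Type*} [∀ i, MeasurableSpace (Ω i)]
  {𝒬 : ∀ i, Set (Measure (Ω i))} {Q : Measure (∀ i, Ω i)}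

theorem isProbabilityMeasure_of_mem_productFamily (hQ : Q ∈ productFamily 𝒬) :
    IsProbabilityMeasure Q := by
  obtain ⟨q, hq, -, rfl⟩ := hQ
  infer_instance

theorem productFamily_nonempty (hne : ∀ i, (𝒬 i).Nonempty)
    (hprob : ∀ i, ∀ q ∈ 𝒬 i, IsProbabilityMeasure q) : (productFamily 𝒬).Nonempty := by
  choose q hq using hne
  exact ⟨_, q, fun i => hprob i _ (hq i), hq, rfl⟩

variable {P : ∀ i, Measure (Ω i)} [∀ i, SigmaFinite (P i)]

theorem absolutelyContinuous_pi_of_mem_productFamily (h : ∀ i, ∀ q ∈ 𝒬 i, q ≪ P i)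
    (hQ : Q ∈ productFamily 𝒬) : Q ≪ Measure.pi P := by
  obtain ⟨q, hq, hq𝒬, rfl⟩ := hQ
  exact .pi fun i => h i _ (hq𝒬 i)

theorem pi_absolutelyContinuous_of_mem_productFamily (h : ∀ i, ∀ q ∈ 𝒬 i, P i ≪ q)
    (hQ : Q ∈ productFamily 𝒬) : Measure.pi P ≪ Q := by
  obtain ⟨q, hq, hq𝒬, rfl⟩ := hQ
  exact .pi fun i => h i _ (hq𝒬 i)

end ProductFamily

section EssSup

variable {α : Type*} [MeasurableSpace α] {μ : Measure α}

def IsAELUB (μ : Measure α) (F : Set (α → ℝ)) (g : α → ℝ) : Prop :=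
  (∀ f ∈ F, f ≤ᵐ[μ] g) ∧ ∀ Z : α → ℝ, (∀ f ∈ F, f ≤ᵐ[μ] Z) → g ≤ᵐ[μ] Z

theorem IsAELUB.ae_eq {F : Set (α → ℝ)} {g g' : α → ℝ} (hg : IsAELUB μ F g)
    (hg' : IsAELUB μ F g') : g =ᵐ[μ] g' :=
  (hg.2 g' hg'.1).antisymm (hg'.2 g hg.1)

theorem ae_le_of_integral_sup_le {f g : α → ℝ} (hf : Integrable f μ) (hg : Integrable g μ)
    (h : ∫ ω, (f ⊔ g) ω ∂μ ≤ ∫ ω, g ω ∂μ) : f ≤ᵐ[μ] g := by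
  have hg_le : g ≤ᵐ[μ] f ⊔ g := .of_forall fun _ => le_sup_right
  have hg_eq : g =ᵐ[μ] f ⊔ g := (integral_eq_iff_of_ae_le hg (hf.sup hg) hg_le).1
    (le_antisymm (integral_mono_ae hg (hf.sup hg) hg_le) h)
  filter_upwards [hg_eq] with ω hω
  exact le_sup_left.trans_eq hω.symm

theorem abs_ciSup_le {ι : Sort*} [Nonempty ι] {u : ι → ℝ} {K : ℝ} (h : ∀ i, |u i| ≤ K) :
    |⨆ i, u i| ≤ K := by
  obtain ⟨i₀⟩ := ‹Nonempty ι›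
  have hbdd : BddAbove (range u) := ⟨K, forall_mem_range.2 fun i => (abs_le.1 (h i)).2⟩
  exact abs_le.2
    ⟨(abs_le.1 (h i₀)).1.trans (le_ciSup hbdd i₀), ciSup_le fun i => (abs_le.1 (h i)).2⟩

theorem exists_measurable_abs_le_ae_eq {f : α → ℝ} (hf : Measurable f) {K : ℝ≥0}
    (hfK : ∀ᵐ ω ∂μ, |f ω| ≤ K) :
    ∃ g : α → ℝ, Measurable g ∧ (∀ ω, |g ω| ≤ K) ∧ g =ᵐ[μ] f := by
  refine ⟨fun ω => max (-K : ℝ) (min K (f ω)), measurable_const.max (measurable_const.min hf),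
    fun ω => abs_le.2 ⟨le_max_left _ _, max_le (by simp) (min_le_left _ _)⟩, ?_⟩
  filter_upwards [hfK] with ω hω
  rw [abs_le] at hω
  simp only [min_eq_right hω.2, max_eq_right hω.1]

variable [IsFiniteMeasure μ] {K : ℝ}

theorem tendsto_integral_of_abs_le {u : ℕ → α → ℝ} {g : α → ℝ} (hmeas : ∀ n, Measurable (u n))
    (hK : ∀ n ω, |u n ω| ≤ K) (hlim : ∀ ω, Tendsto (u · ω) atTop (𝓝 (g ω))) :
    Tendsto (fun n => ∫ ω, u n ω ∂μ) atTop (𝓝 (∫ ω, g ω ∂μ)) :=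
  tendsto_integral_of_dominated_convergence (fun _ => K) (fun n => (hmeas n).aestronglyMeasurable)
    (integrable_const K) (fun n => .of_forall (hK n)) (.of_forall hlim)

theorem exists_seq_ae_le_iSup_of_supClosed {D : Set (α → ℝ)} (hD : SupClosed D)
    (hne : D.Nonempty) (hmeas : ∀ f ∈ D, Measurable f) (hK : ∀ f ∈ D, ∀ ω, |f ω| ≤ K) :
    ∃ u : ℕ → α → ℝ, (∀ n, u n ∈ D) ∧ ∀ f ∈ D, f ≤ᵐ[μ] fun ω => ⨆ n, u n ω := by
  have hint : ∀ f, Measurable f → (∀ ω, |f ω| ≤ K) → Integrable f μ := fun f hf hfK =>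
    .of_bound hf.aestronglyMeasurable K (.of_forall hfK)
  have hbdd : BddAbove ((∫ ω, · ω ∂μ) '' D) := by
    refine ⟨∫ _, K ∂μ, forall_mem_image.2 fun f hf => ?_⟩
    exact integral_mono (hint f (hmeas f hf) (hK f hf)) (integrable_const K)
      fun ω => (abs_le.1 (hK f hf ω)).2
  set c := sSup ((∫ ω, · ω ∂μ) '' D)
  have le_c : ∀ f ∈ D, ∫ ω, f ω ∂μ ≤ c := fun f hf => le_csSup hbdd (mem_image_of_mem _ hf)
  -- a sequence in `D` whose integrals approach `c`, made monotone by taking running maxima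
  obtain ⟨s, -, hs_lim, hs_mem⟩ := exists_seq_tendsto_sSup (hne.image _) hbdd
  choose v hvD hv using hs_mem
  set u := partialSups v
  have huD : ∀ n, u n ∈ D := fun n => hD.finsetSup'_mem Finset.nonempty_Iic fun j _ => hvD j
  set g : α → ℝ := fun ω => ⨆ n, u n ω
  have hgK : ∀ ω, |g ω| ≤ K := fun ω => abs_ciSup_le fun n => hK _ (huD n) ω
  have hg_meas : Measurable g := Measurable.iSup fun n => hmeas _ (huD n)
  have hu_lim : ∀ ω, Tendsto (u · ω) atTop (𝓝 (g ω)) := fun ω =>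
    tendsto_atTop_ciSup (fun m n h => u.monotone h ω)
      ⟨K, forall_mem_range.2 fun n => (abs_le.1 (hK _ (huD n) ω)).2⟩
  have c_le : c ≤ ∫ ω, g ω ∂μ := by
    refine le_of_tendsto_of_tendsto' hs_lim
      (tendsto_integral_of_abs_le (fun n => hmeas _ (huD n)) (fun n => hK _ (huD n)) hu_lim)
      fun n => ?_
    rw [← hv n]
    exact integral_mono (hint _ (hmeas _ (hvD n)) (hK _ (hvD n)))
      (hint _ (hmeas _ (huD n)) (hK _ (huD n))) (le_partialSups v n)
  refine ⟨u, huD, fun f hf => ?_⟩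
  -- `f ⊔ g` is a limit of elements of `D`, so its integral is at most `c ≤ ∫ g`
  have hfg_le : ∫ ω, (f ⊔ g) ω ∂μ ≤ ∫ ω, g ω ∂μ :=
    le_trans (le_of_tendsto' (tendsto_integral_of_abs_le (u := fun n => f ⊔ u n)
      (fun n => hmeas _ (hD hf (huD n))) (fun n => hK _ (hD hf (huD n)))
      fun ω => tendsto_const_nhds.max (hu_lim ω)) fun n => le_c _ (hD hf (huD n))) c_le
  exact ae_le_of_integral_sup_le (hint f (hmeas f hf) (hK f hf)) (hint g hg_meas hgK) hfg_le

theorem exists_isAELUB {G : Set (α → ℝ)} (hne : G.Nonempty) (hmeas : ∀ f ∈ G, Measurable f)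
    (hK : ∀ f ∈ G, ∀ ω, |f ω| ≤ K) :
    ∃ g, Measurable g ∧ (∀ ω, |g ω| ≤ K) ∧ IsAELUB μ G g := by
  set D : Set (α → ℝ) := {f | Measurable f ∧ (∀ ω, |f ω| ≤ K) ∧
    ∀ Z : α → ℝ, (∀ f' ∈ G, f' ≤ᵐ[μ] Z) → f ≤ᵐ[μ] Z}
  have hGD : G ⊆ D := fun f hf => ⟨hmeas f hf, hK f hf, fun Z hZ => hZ f hf⟩
  have hD : SupClosed D := by
    rintro f₁ ⟨hm₁, hK₁, hZ₁⟩ f₂ ⟨hm₂, hK₂, hZ₂⟩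
    refine ⟨hm₁.sup hm₂, fun ω => abs_max_le_max_abs_abs.trans (max_le (hK₁ ω) (hK₂ ω)),
      fun Z hZ => ?_⟩
    filter_upwards [hZ₁ Z hZ, hZ₂ Z hZ] with ω h₁ h₂
    exact sup_le h₁ h₂
  obtain ⟨u, huD, hu⟩ := exists_seq_ae_le_iSup_of_supClosed (μ := μ) hD (hne.mono hGD)
    (fun f hf => hf.1) (fun f hf => hf.2.1)
  refine ⟨fun ω => ⨆ n, u n ω, .iSup fun n => (huD n).1,
    fun ω => abs_ciSup_le fun n => (huD n).2.1 ω, fun f hf => hu f (hGD hf), fun Z hZ => ?_⟩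
  filter_upwards [ae_all_iff.2 fun n => (huD n).2.2 Z hZ] with ω hω
  exact ciSup_le hω

end EssSup

section CondEssSup

/-- `E Y` is `esssup_{Q ∈ 𝒬} Q[Y | m]`, i.e. `E` is the nonlinear expectation `𝔈` given `m`. -/
def IsCondEssSup {Ω : Type*} (m : MeasurableSpace Ω) [MeasurableSpace Ω] (P : Measure Ω)
    (𝒬 : Set (Measure Ω)) (E : (Ω → ℝ) → Ω → ℝ) : Prop :=
  ∀ Y, IsAELUB P ((fun Q => Q[Y | m]) '' 𝒬) (E Y)

variable {Ω : Type*} {m m' : MeasurableSpace Ω} [mΩ : MeasurableSpace Ω] {P : Measure Ω}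
  {𝒬 : Set (Measure Ω)}

theorem isCondEssSup_iff {E : (Ω → ℝ) → Ω → ℝ} :
    IsCondEssSup m P 𝒬 E ↔ (∀ Y, ∀ Q ∈ 𝒬, Q[Y | m] ≤ᵐ[P] E Y) ∧
      ∀ Y Z, (∀ Q ∈ 𝒬, Q[Y | m] ≤ᵐ[P] Z) → E Y ≤ᵐ[P] Z := by
  simp only [IsCondEssSup, IsAELUB, forall_mem_image, forall_and]

theorem exists_isAELUB_condExp [IsFiniteMeasure P] (hm' : m' ≤ mΩ) (h𝒬ne : 𝒬.Nonempty)
    (hP𝒬 : ∀ Q ∈ 𝒬, P ≪ Q) {X : Ω → ℝ} {K : ℝ≥0} (hXK : ∀ ω, |X ω| ≤ K) :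
    ∃ g : Ω → ℝ, Measurable g ∧ (∀ ω, |g ω| ≤ K) ∧ IsAELUB P ((fun Q => Q[X | m']) '' 𝒬) g := by
  set G : Set (Ω → ℝ) :=
    {f | Measurable f ∧ (∀ ω, |f ω| ≤ K) ∧ ∃ Q ∈ 𝒬, f =ᵐ[P] Q[X | m']}
  have hrep : ∀ Q ∈ 𝒬, ∃ f ∈ G, f =ᵐ[P] Q[X | m'] := fun Q hQ => by
    obtain ⟨f, hf, hfK, hfQ⟩ := exists_measurable_abs_le_ae_eq
      (stronglyMeasurable_condExp.mono hm').measurable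
      (hP𝒬 Q hQ |>.ae_le (ae_bdd_abs_condExp_of_ae_bdd_abs (.of_forall hXK)))
    exact ⟨f, ⟨hf, hfK, Q, hQ, hfQ⟩, hfQ⟩
  obtain ⟨Q₀, hQ₀⟩ := h𝒬ne
  obtain ⟨f₀, hf₀, -⟩ := hrep Q₀ hQ₀
  obtain ⟨g, hg, hgK, hG⟩ :=
    exists_isAELUB (μ := P) ⟨f₀, hf₀⟩ (fun f hf => hf.1) fun f hf => hf.2.1
  refine ⟨g, hg, hgK, forall_mem_image.2 fun Q hQ => ?_, fun Z hZ => hG.2 Z ?_⟩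
  · obtain ⟨f, hfG, hfQ⟩ := hrep Q hQ
    exact hfQ.symm.le.trans (hG.1 f hfG)
  · rintro f ⟨-, -, Q, hQ, hfQ⟩
    exact hfQ.le.trans (hZ _ (mem_image_of_mem _ hQ))

variable {E E' : (Ω → ℝ) → Ω → ℝ} (hE : IsCondEssSup m P 𝒬 E) (hE' : IsCondEssSup m' P 𝒬 E')
  (hmm' : m ≤ m') (hm' : m' ≤ mΩ) (h𝒬fin : ∀ Q ∈ 𝒬, IsFiniteMeasure Q)
  (h𝒬P : ∀ Q ∈ 𝒬, Q ≪ P) (hP𝒬 : ∀ Q ∈ 𝒬, P ≪ Q)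
include hE hE' hmm' hm' h𝒬fin h𝒬P hP𝒬

theorem IsCondEssSup.ae_le_comp [IsFiniteMeasure P] (h𝒬ne : 𝒬.Nonempty) {X : Ω → ℝ} {K : ℝ≥0}
    (hXK : ∀ ω, |X ω| ≤ K) : E X ≤ᵐ[P] E (E' X) := by
  obtain ⟨g, hg, hgK, hXg⟩ := exists_isAELUB_condExp (m' := m') hm' h𝒬ne hP𝒬 hXK
  have hE'g : E' X =ᵐ[P] g := (hE' X).ae_eq hXg
  refine (hE X).2 _ (forall_mem_image.2 fun Q hQ => hP𝒬 Q hQ |>.ae_le ?_)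
  have := h𝒬fin Q hQ
  calc Q[X | m] =ᵐ[Q] Q[Q[X | m'] | m] := (condExp_condExp_of_le hmm' hm').symm
    _ ≤ᵐ[Q] Q[g | m] := condExp_mono integrable_condExp
        (.of_bound hg.aestronglyMeasurable K (.of_forall hgK))
        (h𝒬P Q hQ |>.ae_le (hXg.1 _ (mem_image_of_mem _ hQ)))
    _ =ᵐ[Q] Q[E' X | m] := condExp_congr_ae (h𝒬P Q hQ |>.ae_le hE'g.symm)
    _ ≤ᵐ[Q] E (E' X) := h𝒬P Q hQ |>.ae_le ((hE (E' X)).1 _ (mem_image_of_mem _ hQ))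

theorem IsCondEssSup.indicator_nonpos_of_nonpos {X : Ω → ℝ} (hX : ∀ Q ∈ 𝒬, Integrable X Q)
    (h0 : E' X ≤ᵐ[P] 0) {A : Set Ω} (hA : MeasurableSet[m'] A) :
    E (A.indicator X) ≤ᵐ[P] 0 := by
  refine (hE _).2 0 (forall_mem_image.2 fun Q hQ => hP𝒬 Q hQ |>.ae_le ?_)
  have := h𝒬fin Q hQ
  have hX0 : Q[X | m'] ≤ᵐ[Q] 0 :=
    h𝒬P Q hQ |>.ae_le (((hE' X).1 _ (mem_image_of_mem _ hQ)).trans h0)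
  calc Q[A.indicator X | m] =ᵐ[Q] Q[Q[A.indicator X | m'] | m] :=
        (condExp_condExp_of_le hmm' hm').symm
    _ ≤ᵐ[Q] 0 := condExp_nonpos <| (condExp_indicator (hX Q hQ) hA).trans_le <| by
        filter_upwards [hX0] with ω hω
        exact indicator_apply_nonpos fun _ => hω

end CondEssSup

/-- **Proposition 3.1 (ii) (sub-consistency).**  For the partially consistent
orthant nonlinear expectation `𝔈_S(X) = esssup_{Q ∈ 𝒬} E^Q(X | ℱ(S))` with
`𝒬` a family of product measures and orthant σ-algebras
`ℱ(S) ≤ ℱ(S')` (for orthant stopping times `S ≤ S'`),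
`𝔈_S(X) ≤ 𝔈_S(𝔈_{S'}(X))` a.s.; in particular, if `𝔈_{S'}(X) ≤ 0` a.s. then
`𝔈_S(1_A X) ≤ 0` a.s. for every `A ∈ ℱ(S')`. -/
theorem stmt14 {ι : Type*} [Fintype ι] {Ω : ι → Type*}
    (mS mS' : ∀ i, MeasurableSpace (Ω i))
    [mΩ : ∀ i, MeasurableSpace (Ω i)]
    (hSS' : ∀ i, mS i ≤ mS' i) (hS' : ∀ i, mS' i ≤ mΩ i)
    (P : ∀ i, Measure (Ω i)) [∀ i, IsProbabilityMeasure (P i)]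
    (𝒬 : ∀ i, Set (Measure (Ω i))) (h𝒬ne : ∀ i, (𝒬 i).Nonempty)
    (h𝒬 : ∀ i, ∀ q ∈ 𝒬 i, IsProbabilityMeasure q ∧ q ≪ P i ∧ P i ≪ q)
    -- the orthant nonlinear expectations `𝔈_S` and `𝔈_{S'}`
    (ES ES' : ((∀ i, Ω i) → ℝ) → (∀ i, Ω i) → ℝ)
    (hESUB : ∀ Y : (∀ i, Ω i) → ℝ, ∀ Q ∈ productFamily 𝒬,
      Q[Y | ⨆ i, (mS i).comap (fun ω => ω i)] ≤ᵐ[Measure.pi P] ES Y)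
    (hESLeast : ∀ (Y Z : (∀ i, Ω i) → ℝ),
      (∀ Q ∈ productFamily 𝒬,
        Q[Y | ⨆ i, (mS i).comap (fun ω => ω i)] ≤ᵐ[Measure.pi P] Z) →
      ES Y ≤ᵐ[Measure.pi P] Z)
    (hES'UB : ∀ Y : (∀ i, Ω i) → ℝ, ∀ Q ∈ productFamily 𝒬,
      Q[Y | ⨆ i, (mS' i).comap (fun ω => ω i)] ≤ᵐ[Measure.pi P] ES' Y)
    (hES'Least : ∀ (Y Z : (∀ i, Ω i) → ℝ),
      (∀ Q ∈ productFamily 𝒬,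
        Q[Y | ⨆ i, (mS' i).comap (fun ω => ω i)] ≤ᵐ[Measure.pi P] Z) →
      ES' Y ≤ᵐ[Measure.pi P] Z)
    (X : (∀ i, Ω i) → ℝ) (hXmeas : Measurable X)
    (hXbdd : ∃ K, ∀ ω, |X ω| ≤ K) :
    ES X ≤ᵐ[Measure.pi P] ES (ES' X) ∧
    (ES' X ≤ᵐ[Measure.pi P] 0 →
      ∀ A : Set (∀ i, Ω i),
        MeasurableSet[⨆ i, (mS' i).comap (fun ω => ω i)] A →
        ES (A.indicator X) ≤ᵐ[Measure.pi P] 0) := by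
  obtain ⟨K, hK⟩ := hXbdd
  have hXK : ∀ ω, |X ω| ≤ K.toNNReal := fun ω => (hK ω).trans K.le_coe_toNNReal
  have hfin : ∀ Q ∈ productFamily 𝒬, IsFiniteMeasure Q := fun Q hQ =>
    have := isProbabilityMeasure_of_mem_productFamily hQ; inferInstance
  have hQP : ∀ Q ∈ productFamily 𝒬, Q ≪ Measure.pi P := fun Q =>
    absolutelyContinuous_pi_of_mem_productFamily fun i q hq => (h𝒬 i q hq).2.1
  have hPQ : ∀ Q ∈ productFamily 𝒬, Measure.pi P ≪ Q := fun Q =>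
    pi_absolutelyContinuous_of_mem_productFamily fun i q hq => (h𝒬 i q hq).2.2
  have hES := isCondEssSup_iff.2 ⟨hESUB, hESLeast⟩
  have hES' := isCondEssSup_iff.2 ⟨hES'UB, hES'Least⟩
  -- the orthant σ-algebra `⨆ i, (mS i).comap (· i)` is `MeasurableSpace.pi` built from `mS`
  have hmm' := MeasurableSpace.pi_mono hSS'
  have hm' := MeasurableSpace.pi_mono hS'
  refine ⟨hES.ae_le_comp hES' hmm' hm' hfin hQP hPQ
    (productFamily_nonempty h𝒬ne fun i q hq => (h𝒬 i q hq).1) hXK, fun h0 A hA => ?_⟩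
  refine hES.indicator_nonpos_of_nonpos hES' hmm' hm' hfin hQP hPQ (fun Q hQ => ?_) h0 hA
  have := hfin Q hQ
  exact .of_bound hXmeas.aestronglyMeasurable K (.of_forall hK)
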